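/- arXiv:1108.5065 — 4 statements merged into one kernel-verified Lean document; each statement's English description precedes it below -/
import Mathlib

section
/- Let {K^i}_{i=1}^k satisfy ∑ᵢ K^{i†}K^i = I and let ρ be a density matrix with p_i = Tr(K^i ρ K^{i†}) and ρ_i = K^i ρ K^{i†}/p_i. Then the average output entropy is bounded by the entropy of the input: ∑ᵢ pᵢ S(ρᵢ) ≤ S(ρ). -/
/-!
Write `ρ = B B†` and `Fᵢ = Kᵢ B`. Then `Kᵢ ρ Kᵢ† = Fᵢ Fᵢ†` has the same spectrum as
`τᵢ = Fᵢ† Fᵢ`, `∑ᵢ τᵢ = B† B` has the spectrum of `ρ`, and `pᵢ = Tr τᵢ`. The claim thus becomes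
concavity of the entropy, `∑ᵢ pᵢ S(τᵢ / pᵢ) ≤ S(∑ᵢ pᵢ (τᵢ / pᵢ))`. For a concave `f`, concavity of
`A ↦ Tr f(A)` is Jensen's inequality used twice in the eigenbasis `(eᵣ)` of the mixture: its
eigenvalues are the `p`-averages of the diagonal entries `⟨eᵣ, Aᵢ eᵣ⟩`, and each such entry is an
average of the eigenvalues `μⱼ` of `Aᵢ` with doubly stochastic weights `|⟨eᵣ, vⱼ⟩|²`.
-/

open Matrix
open scoped ComplexOrder

/-- Von Neumann entropy of a Hermitian matrix via its eigenvalues. -/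
noncomputable def vnEntropy {n : Type*} [Fintype n] [DecidableEq n]
    {A : Matrix n n ℂ} (hA : A.IsHermitian) : ℝ :=
  -∑ i, hA.eigenvalues i * Real.log (hA.eigenvalues i)

namespace Matrix

section Kraus

variable {ι m n l R : Type*} [Fintype ι] [Fintype m] [Fintype n] [DecidableEq n]
  [CommSemiring R] [StarRing R] {K : ι → Matrix m n R}

lemma sum_trace_mul_mul_conjTranspose_of_sum_eq_one (hK : ∑ i, (K i)ᴴ * K i = 1)
    (ρ : Matrix n n R) : ∑ i, (K i * ρ * (K i)ᴴ).trace = ρ.trace := by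
  calc ∑ i, (K i * ρ * (K i)ᴴ).trace = ∑ i, ((K i)ᴴ * K i * ρ).trace := by
        simp_rw [trace_mul_comm _ (K _)ᴴ, Matrix.mul_assoc]
    _ = ρ.trace := by rw [← trace_sum, ← Matrix.sum_mul, hK, Matrix.one_mul]

lemma sum_conjTranspose_mul_self_of_sum_eq_one (hK : ∑ i, (K i)ᴴ * K i = 1)
    (B : Matrix n l R) : ∑ i, (K i * B)ᴴ * (K i * B) = Bᴴ * B := by
  calc ∑ i, (K i * B)ᴴ * (K i * B) = ∑ i, Bᴴ * ((K i)ᴴ * K i) * B := by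
        simp_rw [conjTranspose_mul, Matrix.mul_assoc]
    _ = Bᴴ * B := by rw [← Matrix.sum_mul, ← Matrix.mul_sum, hK, Matrix.mul_one]

end Kraus

variable {𝕜 n : Type*} [RCLike 𝕜] [Fintype n]

lemma PosSemidef.smul_inv_smul_of_trace_eq {A : Matrix n n 𝕜} (hA : A.PosSemidef) {t : ℝ}
    (ht : (t : 𝕜) = A.trace) : t • t⁻¹ • A = A := by
  rcases eq_or_ne t 0 with rfl | ht₀
  · simp [hA.trace_eq_zero_iff.1 (by simpa using ht.symm)]
  · exact smul_inv_smul₀ ht₀ A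

variable [DecidableEq n]

lemma sum_norm_sq_col_eq_one (U : unitaryGroup n 𝕜) (j : n) :
    ∑ i, ‖(U : Matrix n n 𝕜) i j‖ ^ 2 = 1 := by
  have h := congr_fun₂ (mem_unitaryGroup_iff'.mp U.2) j j
  rw [mul_apply, one_apply_eq] at h
  simp only [star_apply, RCLike.star_def, RCLike.conj_mul] at h
  exact_mod_cast h

lemma sum_norm_sq_row_eq_one (U : unitaryGroup n 𝕜) (i : n) :
    ∑ j, ‖(U : Matrix n n 𝕜) i j‖ ^ 2 = 1 := by
  have h := congr_fun₂ (mem_unitaryGroup_iff.mp U.2) i i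
  rw [mul_apply, one_apply_eq] at h
  simp only [star_apply, RCLike.star_def, RCLike.mul_conj] at h
  exact_mod_cast h

namespace IsHermitian

variable {A : Matrix n n 𝕜} (hA : A.IsHermitian)

lemma eigenvalues_eq_re_diag (r : n) :
    hA.eigenvalues r =
      RCLike.re ((star (hA.eigenvectorUnitary : Matrix n n 𝕜) * A * hA.eigenvectorUnitary) r r) := by
  have h := hA.conjStarAlgAut_star_eigenvectorUnitary
  rw [Unitary.conjStarAlgAut_apply, Unitary.coe_star, star_star] at h
  simp [h]

lemma re_diag_conj_eq_sum (U : unitaryGroup n 𝕜) (r : n) :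
    RCLike.re ((star (U : Matrix n n 𝕜) * A * U) r r) =
      ∑ j, ‖(star (hA.eigenvectorUnitary : Matrix n n 𝕜) * U) j r‖ ^ 2 * hA.eigenvalues j := by
  set G := star (hA.eigenvectorUnitary : Matrix n n 𝕜) * U
  have hconj : star (U : Matrix n n 𝕜) * A * (U : Matrix n n 𝕜) =
      star G * diagonal (RCLike.ofReal ∘ hA.eigenvalues) * G := by
    conv_lhs => rw [hA.spectral_theorem, Unitary.conjStarAlgAut_apply]
    simp only [G, StarMul.star_mul, star_star, Matrix.mul_assoc]
  rw [hconj, mul_apply, map_sum]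
  refine Finset.sum_congr rfl fun j _ => ?_
  rw [mul_diagonal, star_apply, RCLike.star_def, Function.comp_apply, mul_right_comm,
    RCLike.conj_mul]
  norm_cast

variable {f : ℝ → ℝ} {s : Set ℝ}

lemma re_diag_conj_mem (hs : Convex ℝ s) (hAs : ∀ j, hA.eigenvalues j ∈ s)
    (U : unitaryGroup n 𝕜) (r : n) : RCLike.re ((star (U : Matrix n n 𝕜) * A * U) r r) ∈ s := by
  rw [hA.re_diag_conj_eq_sum]
  exact hs.sum_mem (fun j _ => by positivity)
    (sum_norm_sq_col_eq_one (star hA.eigenvectorUnitary * U) r) fun j _ => hAs j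

theorem sum_map_eigenvalues_le_sum_map_re_diag (hf : ConcaveOn ℝ s f)
    (hAs : ∀ j, hA.eigenvalues j ∈ s) (U : unitaryGroup n 𝕜) :
    ∑ j, f (hA.eigenvalues j) ≤ ∑ r, f (RCLike.re ((star (U : Matrix n n 𝕜) * A * U) r r)) := by
  set G := star hA.eigenvectorUnitary * U
  have hjensen (r : n) : ∑ j, ‖(G : Matrix n n 𝕜) j r‖ ^ 2 * f (hA.eigenvalues j) ≤
      f (RCLike.re ((star (U : Matrix n n 𝕜) * A * U) r r)) := by
    rw [re_diag_conj_eq_sum]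
    exact hf.le_map_sum (fun j _ => by positivity) (sum_norm_sq_col_eq_one G r)
      fun j _ => hAs j
  calc ∑ j, f (hA.eigenvalues j)
      = ∑ j, (∑ r, ‖(G : Matrix n n 𝕜) j r‖ ^ 2) * f (hA.eigenvalues j) := by
        simp only [sum_norm_sq_row_eq_one, one_mul]
    _ = ∑ r, ∑ j, ‖(G : Matrix n n 𝕜) j r‖ ^ 2 * f (hA.eigenvalues j) := by
        simp only [Finset.sum_mul]
        exact Finset.sum_comm
    _ ≤ _ := Finset.sum_le_sum fun r _ => hjensen r

end IsHermitian

end Matrix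

theorem ConcaveOn.sum_mul_sum_eigenvalues_le {𝕜 n ι : Type*} [RCLike 𝕜] [Fintype n]
    [DecidableEq n] [Fintype ι] {f : ℝ → ℝ} {s : Set ℝ} (hf : ConcaveOn ℝ s f)
    {A : ι → Matrix n n 𝕜} (hA : ∀ i, (A i).IsHermitian) (hAs : ∀ i j, (hA i).eigenvalues j ∈ s)
    {w : ι → ℝ} (hw₀ : ∀ i, 0 ≤ w i) (hw₁ : ∑ i, w i = 1)
    {T : Matrix n n 𝕜} (hT : T.IsHermitian) (hTA : T = ∑ i, w i • A i) :
    ∑ i, w i * ∑ j, f ((hA i).eigenvalues j) ≤ ∑ r, f (hT.eigenvalues r) := by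
  subst hTA
  set U := hT.eigenvectorUnitary
  set d : ι → n → ℝ := fun i r => RCLike.re ((star (U : Matrix n n 𝕜) * A i * U) r r)
  have hd (r : n) : hT.eigenvalues r = ∑ i, w i • d i r := by
    rw [hT.eigenvalues_eq_re_diag]
    simp [d, U, Finset.mul_sum, Finset.sum_mul, Matrix.sum_apply, RCLike.smul_re]
  calc ∑ i, w i * ∑ j, f ((hA i).eigenvalues j)
      ≤ ∑ i, w i * ∑ r, f (d i r) := Finset.sum_le_sum fun i _ =>
        mul_le_mul_of_nonneg_left ((hA i).sum_map_eigenvalues_le_sum_map_re_diag hf (hAs i) U)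
          (hw₀ i)
    _ = ∑ r, ∑ i, w i • f (d i r) := by
        simp only [Finset.mul_sum, smul_eq_mul]
        exact Finset.sum_comm
    _ ≤ ∑ r, f (hT.eigenvalues r) := Finset.sum_le_sum fun r _ => by
        rw [hd]
        exact hf.le_map_sum (fun i _ => hw₀ i) hw₁ fun i _ =>
          (hA i).re_diag_conj_mem hf.1 (hAs i) U r

section vnEntropy

variable {n : Type*} [Fintype n] [DecidableEq n]

lemma vnEntropy_eq_sum_negMulLog {A : Matrix n n ℂ} (hA : A.IsHermitian) :
    vnEntropy hA = ∑ i, Real.negMulLog (hA.eigenvalues i) := by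
  simp [vnEntropy, Real.negMulLog]

lemma vnEntropy_eq_of_charpoly_eq {A B : Matrix n n ℂ} (hA : A.IsHermitian) (hB : B.IsHermitian)
    (h : A.charpoly = B.charpoly) : vnEntropy hA = vnEntropy hB := by
  rw [vnEntropy, vnEntropy, (hA.eigenvalues_eq_eigenvalues_iff hB).2 h]

lemma vnEntropy_mul_comm {X Y : Matrix n n ℂ} (hXY : (X * Y).IsHermitian)
    (hYX : (Y * X).IsHermitian) : vnEntropy hXY = vnEntropy hYX :=
  vnEntropy_eq_of_charpoly_eq hXY hYX (charpoly_mul_comm X Y)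

lemma vnEntropy_smul_mul_comm {A X Y : Matrix n n ℂ} {c : ℝ} (hA : A.IsHermitian)
    (hYX : (c • (Y * X)).IsHermitian) (hAXY : A = c • (X * Y)) : vnEntropy hA = vnEntropy hYX :=
  vnEntropy_eq_of_charpoly_eq hA hYX <| by
    rw [hAXY, ← Matrix.smul_mul, charpoly_mul_comm, Matrix.mul_smul]

theorem sum_mul_vnEntropy_le {ι : Type*} [Fintype ι] {ω : ι → Matrix n n ℂ}
    (hω : ∀ i, (ω i).PosSemidef) {w : ι → ℝ} (hw₀ : ∀ i, 0 ≤ w i) (hw₁ : ∑ i, w i = 1)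
    {T : Matrix n n ℂ} (hT : T.IsHermitian) (hTω : T = ∑ i, w i • ω i) :
    ∑ i, w i * vnEntropy (hω i).isHermitian ≤ vnEntropy hT := by
  simp only [vnEntropy_eq_sum_negMulLog]
  exact Real.concaveOn_negMulLog.sum_mul_sum_eigenvalues_le (fun i => (hω i).isHermitian)
    (fun i j => (hω i).eigenvalues_nonneg j) hw₀ hw₁ hT hTω

end vnEntropy

/-- The average entropy of the post-measurement states is bounded by the entropy
of the input state: `∑ pᵢ S(ρᵢ) ≤ S(ρ)`. -/
theorem average_output_entropy_le_input_entropy {k N : ℕ}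
    (K : Fin k → Matrix (Fin N) (Fin N) ℂ)
    (hK : ∑ i, (K i)ᴴ * K i = 1)
    (ρ : Matrix (Fin N) (Fin N) ℂ) (hρ : ρ.PosSemidef) (hρtr : ρ.trace = 1)
    (p : Fin k → ℝ) (hp : ∀ i, (p i : ℂ) = (K i * ρ * (K i)ᴴ).trace)
    (ρi : Fin k → Matrix (Fin N) (Fin N) ℂ)
    (hρidef : ∀ i, p i ≠ 0 → ρi i = ((p i : ℂ))⁻¹ • (K i * ρ * (K i)ᴴ))
    (hρiH : ∀ i, (ρi i).IsHermitian) :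
    ∑ i, p i * vnEntropy (hρiH i) ≤ vnEntropy hρ.isHermitian := by
  have hp₀ (i : Fin k) : 0 ≤ p i := by
    exact_mod_cast hp i ▸ (hρ.mul_mul_conjTranspose_same (K i)).trace_nonneg
  have hp₁ : ∑ i, p i = 1 := Complex.ofReal_injective <| by
    push_cast
    simp_rw [hp, sum_trace_mul_mul_conjTranspose_of_sum_eq_one hK, hρtr]
  obtain ⟨B, rfl⟩ : ∃ B : Matrix (Fin N) (Fin N) ℂ, ρ = B * Bᴴ := by
    open scoped MatrixOrder in
    simpa only [star_eq_conjTranspose] using CStarAlgebra.nonneg_iff_eq_mul_star_self.mp hρ.nonneg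
  set F := fun i => K i * B
  have hF (i : Fin k) : K i * (B * Bᴴ) * (K i)ᴴ = F i * (F i)ᴴ := by
    simp only [F, conjTranspose_mul, Matrix.mul_assoc]
  set ω := fun i => (p i)⁻¹ • ((F i)ᴴ * F i)
  have hω (i : Fin k) : (ω i).PosSemidef :=
    (posSemidef_conjTranspose_mul_self (F i)).smul (inv_nonneg.2 (hp₀ i))
  have hρω (i : Fin k) : p i * vnEntropy (hρiH i) = p i * vnEntropy (hω i).isHermitian := by
    rcases eq_or_ne (p i) 0 with hpi | hpi
    · simp [hpi]
    · exact congrArg (p i * ·) <| vnEntropy_smul_mul_comm (hρiH i) (hω i).isHermitian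
        (by rw [hρidef i hpi, hF, ← Complex.ofReal_inv, Complex.coe_smul])
  have hBB : Bᴴ * B = ∑ i, p i • ω i := by
    rw [← sum_conjTranspose_mul_self_of_sum_eq_one hK B]
    refine Finset.sum_congr rfl fun i _ => ?_
    exact ((posSemidef_conjTranspose_mul_self (F i)).smul_inv_smul_of_trace_eq
      (by rw [trace_mul_comm, ← hF]; exact hp i)).symm
  calc ∑ i, p i * vnEntropy (hρiH i)
      = ∑ i, p i * vnEntropy (hω i).isHermitian := Finset.sum_congr rfl fun i _ => hρω i
    _ ≤ vnEntropy (isHermitian_conjTranspose_mul_self B) := sum_mul_vnEntropy_le hω hp₀ hp₁ _ hBB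
    _ = vnEntropy hρ.isHermitian := vnEntropy_mul_comm _ _
end

section
/- For any two density matrices ρ₁, ρ₂ on a finite-dimensional Hilbert space and any purifications |Ψ₁⟩, |Ψ₂⟩ of them, |⟨Ψ₁|Ψ₂⟩|² ≤ F(ρ₁,ρ₂), and the maximum of |⟨Ψ₁|Ψ₂⟩|² over all purifications |Ψ₁⟩ of ρ₁ (with |Ψ₂⟩ fixed) equals F(ρ₁,ρ₂) = (Tr√(√ρ₁ ρ₂ √ρ₁))² (Uhlmann's theorem). -/
open Matrix
open scoped ComplexOrder

/-- The square root of a positive semidefinite matrix (the definition that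
Mathlib of December 2024 had as `Matrix.PosSemidef.sqrt`). -/
noncomputable def Matrix.PosSemidef.sqrt {n 𝕜 : Type*} [Fintype n] [DecidableEq n] [RCLike 𝕜]
    {A : Matrix n n 𝕜} (hA : A.PosSemidef) : Matrix n n 𝕜 :=
  hA.1.eigenvectorUnitary.1 * diagonal ((↑) ∘ (√·) ∘ hA.1.eigenvalues) *
  (star hA.1.eigenvectorUnitary : Matrix n n 𝕜)

theorem Matrix.PosSemidef.posSemidef_sqrt {n 𝕜 : Type*} [Fintype n] [DecidableEq n] [RCLike 𝕜]
    {A : Matrix n n 𝕜} (hA : A.PosSemidef) : hA.sqrt.PosSemidef := by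
  have hd : (diagonal ((↑) ∘ (√·) ∘ hA.1.eigenvalues : n → 𝕜)).PosSemidef :=
    PosSemidef.diagonal (fun i => by simp [Real.sqrt_nonneg])
  simpa [Matrix.PosSemidef.sqrt, Matrix.star_eq_conjTranspose] using
    hd.mul_mul_conjTranspose_same (hA.1.eigenvectorUnitary.1)

/-- `√ρ₁ ρ₂ √ρ₁` is positive semidefinite. -/
theorem sqrt_mul_mul_sqrt_posSemidef {n : Type*} [Fintype n] [DecidableEq n]
    {ρ₁ ρ₂ : Matrix n n ℂ} (h1 : ρ₁.PosSemidef) (h2 : ρ₂.PosSemidef) :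
    (h1.sqrt * ρ₂ * h1.sqrt).PosSemidef := by
  have h := h2.mul_mul_conjTranspose_same h1.sqrt
  rwa [h1.posSemidef_sqrt.isHermitian.eq] at h

/-- Quantum fidelity `F(ρ₁,ρ₂) = (Tr √(√ρ₁ ρ₂ √ρ₁))²`. -/
noncomputable def fidelity {n : Type*} [Fintype n] [DecidableEq n]
    {ρ₁ ρ₂ : Matrix n n ℂ} (h1 : ρ₁.PosSemidef) (h2 : ρ₂.PosSemidef) : ℝ :=
  (((sqrt_mul_mul_sqrt_posSemidef h1 h2).sqrt).trace).re ^ 2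

/-- `Ψ ∈ H' ⊗ H` is a purification of `ρ` if it is a unit vector whose
partial trace over the first factor equals `ρ`. -/
def IsPurification {m n : ℕ} (Ψ : Fin m × Fin n → ℂ)
    (ρ : Matrix (Fin n) (Fin n) ℂ) : Prop :=
  (∑ x, Complex.normSq (Ψ x) = 1) ∧
  ∀ a b, (∑ i, Matrix.vecMulVec Ψ (star Ψ) (i, a) (i, b)) = ρ a b

/-!
Write a vector `Ψ` on `H' ⊗ H` as the matrix `C` of its conjugated amplitudes, so that `Ψ` purifies
`ρ` iff `Cᴴ C = ρ` (and `Tr ρ = 1`), and `⟨Ψ₁|Ψ₂⟩ = Tr (C₂ᴴ C₁)`.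

If `Aᴴ A = Bᴴ B` then `‖A x‖ = ‖B x‖`, so `B x ↦ A x` is a well-defined isometry on the range of `B`;
extending it by zero, resp. to a global isometry, gives `A = V B` with `‖V‖ ≤ 1`, resp. `Vᴴ V = 1`.
Let `P = √(√ρ₁ ρ₂ √ρ₁)`. Since `(C₂ √ρ₁)ᴴ (C₂ √ρ₁) = P²`, we get `C₁ = V₁ √ρ₁`, `C₂ √ρ₁ = V₂ P`,
hence `Tr (C₂ᴴ C₁) = Tr (V₂ᴴ V₁ P)`, and `|Tr (K P)| ≤ ‖K‖ Tr P` for `P ≥ 0` (diagonalize `P`).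
Equality is attained by `C₁ = W √ρ₁`, where `C₂ √ρ₁ = W P` with `W` an isometry.
-/

open scoped Matrix.Norms.L2Operator

theorem LinearMap.exists_linearIsometry_of_norm_eq {𝕜 E F G : Type*} [RCLike 𝕜]
    [NormedAddCommGroup E] [InnerProductSpace 𝕜 E] [NormedAddCommGroup F] [InnerProductSpace 𝕜 F]
    [NormedAddCommGroup G] [InnerProductSpace 𝕜 G] {S : E →ₗ[𝕜] F} {T : E →ₗ[𝕜] G}
    (h : ∀ x, ‖S x‖ = ‖T x‖) :
    ∃ L : range T →ₗᵢ[𝕜] F, ∀ x, L ⟨T x, mem_range_self T x⟩ = S x := by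
  have hker : ker T ≤ ker S := fun x hx => by
    rw [mem_ker] at hx ⊢
    rw [← norm_eq_zero, h, hx, norm_zero]
  let L : range T →ₗ[𝕜] F := (ker T).liftQ S hker ∘ₗ T.quotKerEquivRange.symm.toLinearMap
  have hL : ∀ x, L ⟨T x, mem_range_self T x⟩ = S x := fun x => by
    have : T.quotKerEquivRange.symm ⟨T x, mem_range_self T x⟩ = Submodule.Quotient.mk x := by
      rw [LinearEquiv.symm_apply_eq]
      exact Subtype.ext (T.quotKerEquivRange_apply_mk x).symm
    simp [L, this]
  refine ⟨{ toLinearMap := L, norm_map' := ?_ }, hL⟩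
  rintro ⟨_, x, rfl⟩
  simp [hL, h]

namespace Matrix

variable {𝕜 : Type*} [RCLike 𝕜] {m n : Type*} [Fintype m] [Fintype n] [DecidableEq n]

theorem norm_apply_le_l2_opNorm (M : Matrix m n 𝕜) (i : m) (j : n) : ‖M i j‖ ≤ ‖M‖ := by
  set x := EuclideanSpace.single j (1 : 𝕜)
  calc ‖M i j‖ = ‖((EuclideanSpace.equiv m 𝕜).symm (M *ᵥ x)).ofLp i‖ := by simp [x]
    _ ≤ ‖(EuclideanSpace.equiv m 𝕜).symm (M *ᵥ x)‖ := PiLp.norm_apply_le _ _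
    _ ≤ ‖M‖ * ‖x‖ := M.l2_opNorm_mulVec x
    _ = ‖M‖ := by simp [x]

theorem PosSemidef.sqrt_mul_self {A : Matrix n n 𝕜} (hA : A.PosSemidef) :
    hA.sqrt * hA.sqrt = A := by
  have hsa : IsSelfAdjoint A := hA.1
  have hsqrt : hA.sqrt = cfc Real.sqrt A := by rw [hA.1.cfc_eq]; rfl
  rw [hsqrt, ← cfc_mul Real.sqrt Real.sqrt A]
  conv_rhs => rw [← cfc_id' ℝ A]
  refine cfc_congr fun x hx => Real.mul_self_sqrt ?_
  rw [hA.1.spectrum_real_eq_range_eigenvalues] at hx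
  obtain ⟨i, rfl⟩ := hx
  exact hA.eigenvalues_nonneg i

theorem PosSemidef.norm_trace_mul_le {P : Matrix n n 𝕜} (hP : P.PosSemidef) (K : Matrix n n 𝕜) :
    ‖(K * P).trace‖ ≤ ‖K‖ * RCLike.re P.trace := by
  set U : Matrix n n 𝕜 := (hP.1.eigenvectorUnitary : Matrix n n 𝕜)
  have htrace : (K * P).trace = ∑ i, (star U * K * U) i i * hP.1.eigenvalues i := by
    have hP' : P = U * diagonal (RCLike.ofReal ∘ hP.1.eigenvalues) * star U :=
      hP.1.spectral_theorem
    conv_lhs => rw [hP', ← mul_assoc, ← mul_assoc, trace_mul_comm, ← mul_assoc, ← mul_assoc]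
    simp [trace, mul_diagonal]
  have hnorm : ‖star U * K * U‖ = ‖K‖ := by
    rw [CStarRing.norm_mul_coe_unitary, ← Unitary.coe_star, CStarRing.norm_coe_unitary_mul]
  rw [htrace, hP.1.trace_eq_sum_eigenvalues, map_sum, Finset.mul_sum]
  refine (norm_sum_le _ _).trans (Finset.sum_le_sum fun i _ => ?_)
  rw [norm_mul, RCLike.norm_ofReal, abs_of_nonneg (hP.eigenvalues_nonneg i), RCLike.ofReal_re]
  gcongr
  · exact hP.eigenvalues_nonneg i
  · exact hnorm ▸ norm_apply_le_l2_opNorm _ i i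

variable [DecidableEq m] {k : Type*} [Fintype k] [DecidableEq k]

theorem norm_toEuclideanLin_apply_sq (C : Matrix m n 𝕜) (x : EuclideanSpace 𝕜 n) :
    ‖toEuclideanLin C x‖ ^ 2 = RCLike.re (inner 𝕜 x (toEuclideanLin (Cᴴ * C) x)) := by
  rw [toLpLin_mul_same, toEuclideanLin_conjTranspose_eq_adjoint, LinearMap.comp_apply,
    LinearMap.adjoint_inner_right, inner_self_eq_norm_sq]

theorem norm_toEuclideanLin_apply_eq {A : Matrix m n 𝕜} {B : Matrix k n 𝕜} (h : Aᴴ * A = Bᴴ * B)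
    (x : EuclideanSpace 𝕜 n) : ‖toEuclideanLin A x‖ = ‖toEuclideanLin B x‖ := by
  rw [← sq_eq_sq₀ (norm_nonneg _) (norm_nonneg _), norm_toEuclideanLin_apply_sq,
    norm_toEuclideanLin_apply_sq, h]

theorem exists_l2_opNorm_le_one_mul_eq {A : Matrix m n 𝕜} {B : Matrix k n 𝕜}
    (h : Aᴴ * A = Bᴴ * B) : ∃ V : Matrix m k 𝕜, ‖V‖ ≤ 1 ∧ A = V * B := by
  obtain ⟨L, hL⟩ := LinearMap.exists_linearIsometry_of_norm_eq (norm_toEuclideanLin_apply_eq h)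
  let R := LinearMap.range (toEuclideanLin B)
  let V := L.toLinearMap ∘ₗ R.orthogonalProjectionOnto.toLinearMap
  refine ⟨toEuclideanLin.symm V, ?_, toEuclideanLin.injective ?_⟩
  · rw [l2_opNorm_def, LinearEquiv.trans_apply, LinearEquiv.apply_symm_apply]
    refine ContinuousLinearMap.opNorm_le_bound _ zero_le_one fun y => ?_
    simpa [V] using R.norm_orthogonalProjectionOnto_apply_le y
  · ext1 x
    have hx : R.orthogonalProjectionOnto (toEuclideanLin B x) = ⟨toEuclideanLin B x, _⟩ :=
      R.orthogonalProjectionOnto_mem_subspace_eq_self ⟨_, LinearMap.mem_range_self _ x⟩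
    simp [toLpLin_mul_same, V, hx, hL]

theorem exists_conjTranspose_mul_self_eq_one_mul_eq {A B : Matrix m n 𝕜}
    (h : Aᴴ * A = Bᴴ * B) : ∃ W : Matrix m m 𝕜, Wᴴ * W = 1 ∧ A = W * B := by
  obtain ⟨L, hL⟩ := LinearMap.exists_linearIsometry_of_norm_eq (norm_toEuclideanLin_apply_eq h)
  refine ⟨toEuclideanLin.symm L.extend.toLinearMap, toEuclideanLin.injective ?_,
    toEuclideanLin.injective ?_⟩
  · rw [toLpLin_mul_same, toEuclideanLin_conjTranspose_eq_adjoint, LinearEquiv.apply_symm_apply,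
      LinearIsometry.adjoint_comp_self', toLpLin_one]
  · ext1 x
    simp [toLpLin_mul_same, ← hL, ← L.extend_apply]

end Matrix

section Fidelity

variable {m n : Type*} [Fintype m] [Fintype n] [DecidableEq n]
  {ρ₁ ρ₂ : Matrix n n ℂ} (h1 : ρ₁.PosSemidef) (h2 : ρ₂.PosSemidef)

theorem conjTranspose_mul_self_mul_sqrt {C : Matrix m n ℂ} (hC : Cᴴ * C = ρ₂) :
    (C * h1.sqrt)ᴴ * (C * h1.sqrt) =
      (sqrt_mul_mul_sqrt_posSemidef h1 h2).sqrtᴴ * (sqrt_mul_mul_sqrt_posSemidef h1 h2).sqrt := by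
  rw [(sqrt_mul_mul_sqrt_posSemidef h1 h2).posSemidef_sqrt.1.eq, PosSemidef.sqrt_mul_self,
    conjTranspose_mul, h1.posSemidef_sqrt.1.eq, ← hC]
  simp only [Matrix.mul_assoc]

theorem norm_trace_conjTranspose_mul_le [DecidableEq m] {C₁ C₂ : Matrix m n ℂ}
    (hC₁ : C₁ᴴ * C₁ = ρ₁) (hC₂ : C₂ᴴ * C₂ = ρ₂) :
    ‖(C₂ᴴ * C₁).trace‖ ≤ (sqrt_mul_mul_sqrt_posSemidef h1 h2).sqrt.trace.re := by
  set P := (sqrt_mul_mul_sqrt_posSemidef h1 h2).sqrt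
  have hP : P.PosSemidef := (sqrt_mul_mul_sqrt_posSemidef h1 h2).posSemidef_sqrt
  obtain ⟨V₁, hV₁, rfl⟩ := exists_l2_opNorm_le_one_mul_eq (B := h1.sqrt) <| by
    rw [hC₁, h1.posSemidef_sqrt.1.eq, h1.sqrt_mul_self]
  obtain ⟨V₂, hV₂, hV₂P⟩ :=
    exists_l2_opNorm_le_one_mul_eq (conjTranspose_mul_self_mul_sqrt h1 h2 hC₂)
  have htrace : (C₂ᴴ * (V₁ * h1.sqrt)).trace = (V₂ᴴ * V₁ * P).trace := by
    rw [← Matrix.mul_assoc, trace_mul_comm, ← Matrix.mul_assoc, ← h1.posSemidef_sqrt.1.eq,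
      ← conjTranspose_mul, hV₂P, conjTranspose_mul, hP.1.eq, Matrix.mul_assoc, trace_mul_comm]
  have hV : ‖V₂ᴴ * V₁‖ ≤ 1 := calc
    ‖V₂ᴴ * V₁‖ ≤ ‖V₂ᴴ‖ * ‖V₁‖ := l2_opNorm_mul _ _
    _ = ‖V₂‖ * ‖V₁‖ := by rw [l2_opNorm_conjTranspose]
    _ ≤ 1 := mul_le_one₀ hV₂ (norm_nonneg _) hV₁
  calc ‖(C₂ᴴ * (V₁ * h1.sqrt)).trace‖ = ‖(V₂ᴴ * V₁ * P).trace‖ := by rw [htrace]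
    _ ≤ ‖V₂ᴴ * V₁‖ * P.trace.re := hP.norm_trace_mul_le _
    _ ≤ P.trace.re := mul_le_of_le_one_left (Complex.nonneg_iff.1 hP.trace_nonneg).1 hV

theorem exists_trace_conjTranspose_mul_eq {C₂ : Matrix n n ℂ} (hC₂ : C₂ᴴ * C₂ = ρ₂) :
    ∃ C₁ : Matrix n n ℂ, C₁ᴴ * C₁ = ρ₁ ∧
      (C₂ᴴ * C₁).trace = (sqrt_mul_mul_sqrt_posSemidef h1 h2).sqrt.trace := by
  set P := (sqrt_mul_mul_sqrt_posSemidef h1 h2).sqrt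
  have hP : P.PosSemidef := (sqrt_mul_mul_sqrt_posSemidef h1 h2).posSemidef_sqrt
  obtain ⟨W, hW, hWP⟩ :=
    exists_conjTranspose_mul_self_eq_one_mul_eq (conjTranspose_mul_self_mul_sqrt h1 h2 hC₂)
  refine ⟨W * h1.sqrt, ?_, ?_⟩
  · rw [conjTranspose_mul, h1.posSemidef_sqrt.1.eq, mul_assoc, ← mul_assoc Wᴴ, hW, one_mul,
      h1.sqrt_mul_self]
  · rw [← mul_assoc, trace_mul_comm, ← mul_assoc, ← h1.posSemidef_sqrt.1.eq, ← conjTranspose_mul,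
      hWP, conjTranspose_mul, hP.1.eq, mul_assoc, hW, mul_one]

end Fidelity

/-- Conjugating the amplitudes makes `(amplitudeEquiv Ψ)ᴴ * amplitudeEquiv Ψ` the partial trace of
`|Ψ⟩⟨Ψ|` over the first factor rather than its transpose. -/
def amplitudeEquiv {ι κ : Type*} : (ι × κ → ℂ) ≃ Matrix ι κ ℂ where
  toFun Ψ := of fun i a => star (Ψ (i, a))
  invFun C x := star (C x.1 x.2)
  left_inv Ψ := by ext; simp
  right_inv C := by ext; simp

theorem sum_star_mul_eq_trace {m n : ℕ} (Ψ₁ Ψ₂ : Fin m × Fin n → ℂ) :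
    ∑ x, star (Ψ₁ x) * Ψ₂ x = ((amplitudeEquiv Ψ₂)ᴴ * amplitudeEquiv Ψ₁).trace := by
  rw [Fintype.sum_prod_type, Finset.sum_comm]
  simp [trace, mul_apply, amplitudeEquiv, mul_comm]

theorem isPurification_iff {m n : ℕ} {Ψ : Fin m × Fin n → ℂ} {ρ : Matrix (Fin n) (Fin n) ℂ} :
    IsPurification Ψ ρ ↔ (amplitudeEquiv Ψ)ᴴ * amplitudeEquiv Ψ = ρ ∧ ρ.trace = 1 := by
  have hnorm : ((∑ x, Complex.normSq (Ψ x) : ℝ) : ℂ) =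
      ((amplitudeEquiv Ψ)ᴴ * amplitudeEquiv Ψ).trace := by
    rw [Complex.ofReal_sum, Fintype.sum_prod_type, Finset.sum_comm]
    simp [trace, mul_apply, amplitudeEquiv, Complex.mul_conj]
  have hgram : (amplitudeEquiv Ψ)ᴴ * amplitudeEquiv Ψ = ρ ↔
      ∀ a b, ∑ i, vecMulVec Ψ (star Ψ) (i, a) (i, b) = ρ a b := by
    simp [← Matrix.ext_iff, mul_apply, amplitudeEquiv, vecMulVec_apply]
  rw [IsPurification, ← hgram]
  constructor
  · rintro ⟨hone, hρ⟩
    refine ⟨hρ, ?_⟩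
    rw [← hρ, ← hnorm, hone, Complex.ofReal_one]
  · rintro ⟨hρ, htr⟩
    refine ⟨?_, hρ⟩
    rw [hρ, htr] at hnorm
    exact_mod_cast hnorm

theorem uhlmann_general {n : ℕ}
    (ρ₁ ρ₂ : Matrix (Fin n) (Fin n) ℂ)
    (h1 : ρ₁.PosSemidef) (h2 : ρ₂.PosSemidef)
    (htr1 : ρ₁.trace = 1) :
    (∀ (m : ℕ) (Ψ₁ Ψ₂ : Fin m × Fin n → ℂ),
        IsPurification Ψ₁ ρ₁ → IsPurification Ψ₂ ρ₂ →
        Complex.normSq (∑ x, star (Ψ₁ x) * Ψ₂ x) ≤ fidelity h1 h2) ∧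
    (∀ Ψ₂ : Fin n × Fin n → ℂ, IsPurification Ψ₂ ρ₂ →
        ∃ Ψ₁ : Fin n × Fin n → ℂ, IsPurification Ψ₁ ρ₁ ∧
          Complex.normSq (∑ x, star (Ψ₁ x) * Ψ₂ x) = fidelity h1 h2) := by
  refine ⟨fun m Ψ₁ Ψ₂ hΨ₁ hΨ₂ => ?_, fun Ψ₂ hΨ₂ => ?_⟩
  · rw [sum_star_mul_eq_trace, fidelity, ← Complex.sq_norm]
    exact pow_le_pow_left₀ (norm_nonneg _) (norm_trace_conjTranspose_mul_le h1 h2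
      (isPurification_iff.1 hΨ₁).1 (isPurification_iff.1 hΨ₂).1) 2
  · obtain ⟨C₁, hC₁, htrace⟩ := exists_trace_conjTranspose_mul_eq h1 h2 (isPurification_iff.1 hΨ₂).1
    refine ⟨amplitudeEquiv.symm C₁, isPurification_iff.2 ⟨by rwa [Equiv.apply_symm_apply], htr1⟩, ?_⟩
    have him : (sqrt_mul_mul_sqrt_posSemidef h1 h2).sqrt.trace.im = 0 := by
      simp [(sqrt_mul_mul_sqrt_posSemidef h1 h2).posSemidef_sqrt.1.trace_eq_sum_eigenvalues]
    rw [sum_star_mul_eq_trace, Equiv.apply_symm_apply, htrace, fidelity, Complex.normSq_apply, him]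
    ring

/-- Uhlmann's theorem: `|⟨Ψ₁|Ψ₂⟩|² ≤ F(ρ₁,ρ₂)` for all purifications, and the
maximum over purifications `Ψ₁` of `ρ₁` (with `Ψ₂` fixed) is attained and
equals `F(ρ₁,ρ₂)`. -/
theorem uhlmann {n : ℕ}
    (ρ₁ ρ₂ : Matrix (Fin n) (Fin n) ℂ)
    (h1 : ρ₁.PosSemidef) (h2 : ρ₂.PosSemidef)
    (htr1 : ρ₁.trace = 1) (htr2 : ρ₂.trace = 1) :
    (∀ (m : ℕ) (Ψ₁ Ψ₂ : Fin m × Fin n → ℂ),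
        IsPurification Ψ₁ ρ₁ → IsPurification Ψ₂ ρ₂ →
        Complex.normSq (∑ x, star (Ψ₁ x) * Ψ₂ x) ≤ fidelity h1 h2) ∧
    (∀ Ψ₂ : Fin n × Fin n → ℂ, IsPurification Ψ₂ ρ₂ →
        ∃ Ψ₁ : Fin n × Fin n → ℂ, IsPurification Ψ₁ ρ₁ ∧
          Complex.normSq (∑ x, star (Ψ₁ x) * Ψ₂ x) = fidelity h1 h2) :=
  uhlmann_general ρ₁ ρ₂ h1 h2 htr1
end

section
/- For invertible density matrices ρ₁, ρ₂, define √(ρ₁ρ₂) := ρ₁^{1/2} √(ρ₁^{1/2} ρ₂ ρ₁^{1/2}) ρ₁^{−1/2}. Then the 2N×2N block matrix [[ρ₁, √(ρ₁ρ₂)],[√(ρ₂ρ₁), ρ₂]] is positive semidefinite, where √(ρ₂ρ₁) = (√(ρ₁ρ₂))†. -/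
open Matrix
open scoped ComplexOrder

/-!
With `S = ρ₁^{1/2}` and `T = √(S ρ₂ S)`, the block matrix is the Gram matrix
`[S, T S⁻¹]ᴴ [S, T S⁻¹]`: indeed `Sᴴ (T S⁻¹) = √(ρ₁ρ₂)` and
`(T S⁻¹)ᴴ (T S⁻¹) = S⁻¹ T² S⁻¹ = ρ₂`.
-/

namespace Matrix

theorem posSemidef_fromBlocks_conjTranspose_mul {m n p R : Type*} [Fintype m] [Finite n]
    [Finite p] [Ring R] [PartialOrder R] [StarRing R] [StarOrderedRing R]
    (A : Matrix m n R) (B : Matrix m p R) :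
    (fromBlocks (Aᴴ * A) (Aᴴ * B) (Bᴴ * A) (Bᴴ * B)).PosSemidef := by
  rw [← fromRows_mul_fromCols, ← conjTranspose_fromCols_eq_fromRows_conjTranspose]
  exact posSemidef_conjTranspose_mul_self _

end Matrix

theorem block_matrix_with_sqrt_product_posSemidef_general {N : ℕ}
    (ρ₁ ρ₂ : Matrix (Fin N) (Fin N) ℂ)
    (h1 : ρ₁.PosDef)
    (S1 : Matrix (Fin N) (Fin N) ℂ) (hS1 : S1.PosSemidef) (hS1sq : S1 * S1 = ρ₁)
    (T : Matrix (Fin N) (Fin N) ℂ) (hT : T.PosSemidef) (hTsq : T * T = S1 * ρ₂ * S1)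
    (X : Matrix (Fin N) (Fin N) ℂ) (hX : X = S1 * T * S1⁻¹) :
    (Matrix.fromBlocks ρ₁ X Xᴴ ρ₂).PosSemidef := by
  have hS1det : IsUnit S1.det := (isUnit_iff_isUnit_det S1).mp <|
    isUnit_of_mul_isUnit_left (hS1sq ▸ h1.isUnit)
  have hρ₁ : S1ᴴ * S1 = ρ₁ := by rw [hS1.1.eq, hS1sq]
  have hX' : S1ᴴ * (T * S1⁻¹) = X := by rw [hS1.1.eq, hX, mul_assoc]
  have hρ₂ : (T * S1⁻¹)ᴴ * (T * S1⁻¹) = ρ₂ := calc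
    (T * S1⁻¹)ᴴ * (T * S1⁻¹) = S1⁻¹ * (S1 * (ρ₂ * S1)) * S1⁻¹ := by
      rw [conjTranspose_mul, conjTranspose_nonsing_inv, hS1.1.eq, hT.1.eq, ← mul_assoc,
        mul_assoc _ T T, hTsq, mul_assoc S1]
    _ = ρ₂ := by
      rw [nonsing_inv_mul_cancel_left _ _ hS1det, mul_nonsing_inv_cancel_right _ _ hS1det]
  rw [← hρ₁, ← hX', ← hρ₂, conjTranspose_mul, conjTranspose_conjTranspose]
  exact posSemidef_fromBlocks_conjTranspose_mul _ _

/-- For invertible density matrices `ρ₁, ρ₂`, with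
`√(ρ₁ρ₂) := ρ₁^{1/2} √(ρ₁^{1/2} ρ₂ ρ₁^{1/2}) ρ₁^{−1/2}`, the block matrix
`[[ρ₁, √(ρ₁ρ₂)],[(√(ρ₁ρ₂))ᴴ, ρ₂]]` is positive semidefinite. -/
theorem block_matrix_with_sqrt_product_posSemidef {N : ℕ}
    (ρ₁ ρ₂ : Matrix (Fin N) (Fin N) ℂ)
    (h1 : ρ₁.PosDef) (h2 : ρ₂.PosDef)
    (htr1 : ρ₁.trace = 1) (htr2 : ρ₂.trace = 1)
    (S1 : Matrix (Fin N) (Fin N) ℂ) (hS1 : S1.PosSemidef) (hS1sq : S1 * S1 = ρ₁)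
    (T : Matrix (Fin N) (Fin N) ℂ) (hT : T.PosSemidef) (hTsq : T * T = S1 * ρ₂ * S1)
    (X : Matrix (Fin N) (Fin N) ℂ) (hX : X = S1 * T * S1⁻¹) :
    (Matrix.fromBlocks ρ₁ X Xᴴ ρ₂).PosSemidef :=
  block_matrix_with_sqrt_product_posSemidef_general ρ₁ ρ₂ h1 S1 hS1 hS1sq T hT hTsq X hX
end

section
/- For a one-qubit Davies channel Φ with Bloch-representation parameters η₁ = η₂ = c (axes in the x,y directions), η₃ and translation κ₃ along the z-axis, assuming η₁² > η₃² ≥ 0 and κ₃ ≥ 0, the maximal Euclidean (operator 2-) norm of the output over all density matrices equals M_Φ = ½(1 + √(η₁² + κ₃²η₁²/(η₁² − η₃²))). -/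
/-!
Write a state as `½(1 + S)` with `S = x·σ`. Since `S` is self-adjoint with `S² = |x|²`, the
C*-identity gives `‖S‖ = |x|`, and `1 + S` acts as `1 + |x|` on `S + |x|`, which is nonzero for
`x ≠ 0` as `S` is traceless; so `‖½(1 + S)‖ = ½(1 + |x|)`. Hence the output norm is `½(1 + |y|)`
for the image `y` of the Bloch vector, and since `det ρ = (1 - |x|²)/4` the problem is to maximise
`|y|² = η₁²(x₀² + x₁²) + (η₃x₂ + κ₃)²` over the unit ball. With `D = η₁² - η₃²`, the gap to the
claimed maximum times `D` is `(D x₂ - η₃κ₃)² + Dη₁²(1 - |x|²)`, so the maximum is attained on the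
sphere at `x₂ = η₃κ₃/D`, which lies in `[0, 1]` by the hypotheses.
-/

open Matrix
open scoped ComplexOrder

/-- The one-qubit state `½(I + x·σ)` with Bloch vector `x ∈ ℝ³`. -/
noncomputable def blochState (x : Fin 3 → ℝ) : Matrix (Fin 2) (Fin 2) ℂ :=
  (1 / 2 : ℂ) • !![1 + (x 2 : ℂ), (x 0 : ℂ) - Complex.I * (x 1 : ℂ);
                   (x 0 : ℂ) + Complex.I * (x 1 : ℂ), 1 - (x 2 : ℂ)]

section NormOneAdd

variable {A : Type*} [NormedRing A] [NormedAlgebra ℝ A]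

theorem le_norm_one_add_of_mul_self_eq {S : A} {r : ℝ} (hSS : S * S = r ^ 2 • 1)
    (hne : S + r • 1 ≠ 0) : 1 + r ≤ ‖1 + S‖ := by
  have hmul : (1 + S) * (S + r • 1) = (1 + r) • (S + r • 1) := by
    simp only [add_mul, one_mul, mul_add, hSS, mul_smul_comm, mul_one, add_smul, one_smul,
      smul_add, smul_smul]
    module
  have hpos : 0 < ‖S + r • 1‖ := norm_pos_iff.mpr hne
  refine le_of_mul_le_mul_right ?_ hpos
  calc (1 + r) * ‖S + r • 1‖ ≤ ‖(1 + r) • (S + r • 1)‖ := by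
        rw [norm_smul]; gcongr; exact Real.le_norm_self _
    _ = ‖(1 + S) * (S + r • 1)‖ := by rw [hmul]
    _ ≤ ‖1 + S‖ * ‖S + r • 1‖ := norm_mul_le _ _

variable [NormOneClass A] [StarRing A] [CStarRing A]

theorem IsSelfAdjoint.norm_eq_of_mul_self_eq {S : A} (hS : IsSelfAdjoint S) {r : ℝ} (hr : 0 ≤ r)
    (hSS : S * S = r ^ 2 • 1) : ‖S‖ = r := by
  have h : ‖S‖ ^ 2 = r ^ 2 := by
    rw [← hS.norm_mul_self, hSS, norm_smul, norm_one, mul_one, Real.norm_of_nonneg (by positivity)]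
  exact (pow_left_inj₀ (norm_nonneg S) hr two_ne_zero).mp h

theorem IsSelfAdjoint.norm_one_add_of_mul_self_eq {S : A} (hS : IsSelfAdjoint S) {r : ℝ}
    (hr : 0 ≤ r) (hSS : S * S = r ^ 2 • 1) (hne : S + r • 1 = 0 → r = 0) :
    ‖1 + S‖ = 1 + r := by
  refine le_antisymm ?_ ?_
  · calc ‖1 + S‖ ≤ ‖(1 : A)‖ + ‖S‖ := norm_add_le _ _
      _ = 1 + r := by rw [norm_one, hS.norm_eq_of_mul_self_eq hr hSS]
  · by_cases h : S + r • 1 = 0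
    · have hr0 := hne h
      have hS0 : S = 0 := by
        simpa [hr0] using hS.norm_eq_of_mul_self_eq hr hSS
      simp [hS0, hr0]
    · exact le_norm_one_add_of_mul_self_eq hSS h

end NormOneAdd

/-- `x · σ = x₀σ₁ + x₁σ₂ + x₂σ₃` for the Pauli matrices `σᵢ`. -/
def pauliDot (x : Fin 3 → ℝ) : Matrix (Fin 2) (Fin 2) ℂ :=
  !![(x 2 : ℂ), (x 0 : ℂ) - Complex.I * (x 1 : ℂ); (x 0 : ℂ) + Complex.I * (x 1 : ℂ), -(x 2 : ℂ)]

theorem blochState_eq (x : Fin 3 → ℝ) : blochState x = (1 / 2 : ℂ) • (1 + pauliDot x) := by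
  rw [blochState, pauliDot, one_fin_two, of_add_of]
  congr 1
  simp only [cons_add_cons, empty_add_empty, zero_add, sub_eq_add_neg]

theorem isHermitian_pauliDot (x : Fin 3 → ℝ) : (pauliDot x).IsHermitian := by
  ext i j
  fin_cases i <;> fin_cases j <;> simp [pauliDot, sub_eq_add_neg]

theorem trace_pauliDot (x : Fin 3 → ℝ) : (pauliDot x).trace = 0 := by
  simp [pauliDot, Matrix.trace_fin_two]

theorem pauliDot_mul_self (x : Fin 3 → ℝ) :
    pauliDot x * pauliDot x = (x 0 ^ 2 + x 1 ^ 2 + x 2 ^ 2) • 1 := by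
  rw [pauliDot, mul_fin_two, one_fin_two, smul_of]
  simp only [smul_cons, smul_empty, Complex.real_smul, mul_one, mul_zero,
    EmbeddingLike.apply_eq_iff_eq, vecCons_inj, and_true]
  push_cast
  refine ⟨⟨?_, ?_⟩, ?_, ?_⟩
  · linear_combination (-(x 1 : ℂ) ^ 2) * Complex.I_sq
  · ring
  · ring
  · linear_combination (-(x 1 : ℂ) ^ 2) * Complex.I_sq

theorem Matrix.toEuclideanCLM_real_smul {n : Type*} [Fintype n] [DecidableEq n] (r : ℝ)
    (M : Matrix n n ℂ) : toEuclideanCLM (𝕜 := ℂ) (r • M) = r • toEuclideanCLM (𝕜 := ℂ) M := by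
  rw [← Complex.coe_smul, map_smul]
  rfl

theorem norm_toEuclideanCLM_blochState (x : Fin 3 → ℝ) :
    ‖toEuclideanCLM (𝕜 := ℂ) (blochState x)‖ = 1 / 2 * (1 + √(x 0 ^ 2 + x 1 ^ 2 + x 2 ^ 2)) := by
  set r := √(x 0 ^ 2 + x 1 ^ 2 + x 2 ^ 2)
  have hr : 0 ≤ r := Real.sqrt_nonneg _
  have hrr : r ^ 2 = x 0 ^ 2 + x 1 ^ 2 + x 2 ^ 2 := Real.sq_sqrt (by positivity)
  set S := toEuclideanCLM (𝕜 := ℂ) (pauliDot x)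
  have hS : IsSelfAdjoint S := (isHermitian_pauliDot x).isSelfAdjoint.map _
  have hSS : S * S = r ^ 2 • 1 := by
    rw [← map_mul, pauliDot_mul_self, hrr, toEuclideanCLM_real_smul, map_one]
  have hne : S + r • 1 = 0 → r = 0 := by
    intro h
    have h' : pauliDot x + r • 1 = 0 := by
      rwa [← EmbeddingLike.map_eq_zero_iff (f := toEuclideanCLM (𝕜 := ℂ)), map_add,
        toEuclideanCLM_real_smul, map_one]
    simpa [trace_pauliDot] using congrArg Matrix.trace h'
  rw [blochState_eq, map_smul, map_add, map_one, norm_smul,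
    hS.norm_one_add_of_mul_self_eq hr hSS hne]
  norm_num

theorem trace_blochState (x : Fin 3 → ℝ) : (blochState x).trace = 1 := by
  rw [blochState_eq, trace_smul, trace_add, trace_pauliDot, trace_one]
  norm_num

theorem det_blochState (x : Fin 3 → ℝ) :
    (blochState x).det = ((1 - (x 0 ^ 2 + x 1 ^ 2 + x 2 ^ 2)) / 4 : ℝ) := by
  rw [blochState, det_smul, det_fin_two_of, Fintype.card_fin]
  push_cast
  linear_combination ((x 1 : ℂ) ^ 2 / 4) * Complex.I_sq

theorem exists_blochState_eq_of_isHermitian {ρ : Matrix (Fin 2) (Fin 2) ℂ} (hρ : ρ.IsHermitian)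
    (htr : ρ.trace = 1) : ∃ x, ρ = blochState x := by
  have h00 : ((ρ 0 0).re : ℂ) = ρ 0 0 := hρ.coe_re_apply_self 0
  have h11 : ((ρ 1 1).re : ℂ) = ρ 1 1 := hρ.coe_re_apply_self 1
  have h01 : star (ρ 1 0) = ρ 0 1 := hρ.apply 0 1
  rw [trace_fin_two] at htr
  refine ⟨![2 * (ρ 1 0).re, 2 * (ρ 1 0).im, (ρ 0 0).re - (ρ 1 1).re], ?_⟩
  conv_lhs => rw [eta_fin_two ρ]
  rw [blochState, smul_of]
  simp only [smul_cons, smul_empty, smul_eq_mul, cons_val, EmbeddingLike.apply_eq_iff_eq,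
    vecCons_inj, and_true]
  push_cast
  refine ⟨⟨?_, ?_⟩, ?_, ?_⟩
  · linear_combination htr / 2 - h00 / 2 + h11 / 2
  · rw [← h01]
    apply Complex.ext <;> simp
  · nth_rewrite 1 [← Complex.re_add_im (ρ 1 0)]
    ring
  · linear_combination htr / 2 + h00 / 2 - h11 / 2

theorem sum_sq_le_one_of_posSemidef_blochState {x : Fin 3 → ℝ} (hx : (blochState x).PosSemidef) :
    x 0 ^ 2 + x 1 ^ 2 + x 2 ^ 2 ≤ 1 := by
  have h := hx.det_nonneg
  rw [det_blochState, Complex.zero_le_real] at h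
  linarith

theorem posSemidef_blochState_sin_zero_cos (φ : ℝ) :
    (blochState ![Real.sin φ, 0, Real.cos φ]).PosSemidef := by
  have hs : Real.sin φ = 2 * Real.sin (φ / 2) * Real.cos (φ / 2) := by
    rw [← Real.sin_two_mul, mul_div_cancel₀ _ two_ne_zero]
  have hc : Real.cos φ = Real.cos (φ / 2) ^ 2 - Real.sin (φ / 2) ^ 2 := by
    rw [← Real.cos_two_mul', mul_div_cancel₀ _ two_ne_zero]
  have h1 := Real.cos_sq_add_sin_sq (φ / 2)
  rw [hs, hc]
  generalize Real.cos (φ / 2) = a, Real.sin (φ / 2) = b at h1 ⊢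
  have hC : (a : ℂ) ^ 2 + (b : ℂ) ^ 2 = 1 := by exact_mod_cast h1
  convert posSemidef_vecMulVec_self_star ![(a : ℂ), b] using 1
  rw [blochState, smul_of, eta_fin_two (vecMulVec _ _)]
  simp only [smul_cons, smul_empty, smul_eq_mul, cons_val, vecMulVec_apply, Pi.star_apply,
    Complex.star_def, Complex.conj_ofReal, EmbeddingLike.apply_eq_iff_eq, vecCons_inj, and_true]
  push_cast
  refine ⟨⟨?_, ?_⟩, ?_, ?_⟩
  · linear_combination (-1 / 2 : ℂ) * hC
  · ring
  · ring
  · linear_combination (-1 / 2 : ℂ) * hC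

theorem davies_output_normSq_le {η₁ η₃ κ s z : ℝ} (hη : η₃ ^ 2 < η₁ ^ 2) (hsz : s + z ^ 2 ≤ 1) :
    η₁ ^ 2 * s + (η₃ * z + κ) ^ 2 ≤ η₁ ^ 2 + κ ^ 2 * η₁ ^ 2 / (η₁ ^ 2 - η₃ ^ 2) := by
  have hD : 0 < η₁ ^ 2 - η₃ ^ 2 := sub_pos.2 hη
  have hgap : η₁ ^ 2 + κ ^ 2 * η₁ ^ 2 / (η₁ ^ 2 - η₃ ^ 2) - (η₁ ^ 2 * s + (η₃ * z + κ) ^ 2) =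
      (((η₁ ^ 2 - η₃ ^ 2) * z - η₃ * κ) ^ 2 + (η₁ ^ 2 - η₃ ^ 2) * η₁ ^ 2 * (1 - s - z ^ 2)) /
        (η₁ ^ 2 - η₃ ^ 2) := by
    field_simp
    ring
  have hs : 0 ≤ 1 - s - z ^ 2 := by linarith
  rw [← sub_nonneg, hgap]
  positivity

theorem davies_output_normSq_optimal {η₁ η₃ κ z : ℝ} (hη : η₃ ^ 2 < η₁ ^ 2)
    (hz : z = η₃ * κ / (η₁ ^ 2 - η₃ ^ 2)) :
    η₁ ^ 2 * (1 - z ^ 2) + (η₃ * z + κ) ^ 2 = η₁ ^ 2 + κ ^ 2 * η₁ ^ 2 / (η₁ ^ 2 - η₃ ^ 2) := by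
  have hD : η₁ ^ 2 - η₃ ^ 2 ≠ 0 := (sub_pos.2 hη).ne'
  subst hz
  field_simp
  ring

/-- For a one-qubit Davies channel acting on Bloch vectors as
`(x,y,z) ↦ (η₁x, η₁y, η₃z + κ₃)`, with `η₁² > η₃² ≥ 0`, `κ₃ ≥ 0` (and the
complete-positivity constraint `κ₃η₃ ≤ η₁² − η₃²`), the maximal operator
2-norm of the output over all density matrices equals
`M_Φ = ½(1 + √(η₁² + κ₃²η₁²/(η₁² − η₃²)))`. -/
theorem davies_maximal_output_two_norm (η₁ η₃ κ₃ : ℝ)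
    (hη : η₃ ^ 2 < η₁ ^ 2) (hη₃ : 0 ≤ η₃) (hκ : 0 ≤ κ₃)
    (hcp : κ₃ * η₃ ≤ η₁ ^ 2 - η₃ ^ 2)
    (Φ : Matrix (Fin 2) (Fin 2) ℂ → Matrix (Fin 2) (Fin 2) ℂ)
    (hΦ : ∀ x : Fin 3 → ℝ,
      Φ (blochState x) = blochState ![η₁ * x 0, η₁ * x 1, η₃ * x 2 + κ₃]) :
    IsGreatest
      {v : ℝ | ∃ ρ : Matrix (Fin 2) (Fin 2) ℂ, ρ.PosSemidef ∧ ρ.trace = 1 ∧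
        v = ‖Matrix.toEuclideanCLM (𝕜 := ℂ) (Φ ρ)‖}
      (1 / 2 * (1 + Real.sqrt (η₁ ^ 2 + κ₃ ^ 2 * η₁ ^ 2 / (η₁ ^ 2 - η₃ ^ 2)))) := by
  have hD : 0 < η₁ ^ 2 - η₃ ^ 2 := sub_pos.2 hη
  set z := η₃ * κ₃ / (η₁ ^ 2 - η₃ ^ 2) with hz
  have hz₀ : -1 ≤ z := by linarith [show 0 ≤ z by positivity]
  have hz₁ : z ≤ 1 := (div_le_one hD).2 (by linarith)
  constructor
  · refine ⟨blochState ![Real.sin (Real.arccos z), 0, Real.cos (Real.arccos z)],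
      posSemidef_blochState_sin_zero_cos _, trace_blochState _, ?_⟩
    rw [hΦ, norm_toEuclideanCLM_blochState, Real.sin_arccos, Real.cos_arccos hz₀ hz₁,
      ← davies_output_normSq_optimal hη hz]
    simp [mul_pow, Real.sq_sqrt (show 0 ≤ 1 - z ^ 2 by nlinarith)]
  · rintro _ ⟨ρ, hρ, htr, rfl⟩
    obtain ⟨x, rfl⟩ := exists_blochState_eq_of_isHermitian hρ.isHermitian htr
    have hx := sum_sq_le_one_of_posSemidef_blochState hρ
    rw [hΦ, norm_toEuclideanCLM_blochState]
    gcongr 1 / 2 * (1 + √?_)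
    calc (η₁ * x 0) ^ 2 + (η₁ * x 1) ^ 2 + (η₃ * x 2 + κ₃) ^ 2
        = η₁ ^ 2 * (x 0 ^ 2 + x 1 ^ 2) + (η₃ * x 2 + κ₃) ^ 2 := by ring
      _ ≤ _ := davies_output_normSq_le hη (by linarith)
end
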